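/- Let a ∈ ℝ, n ≥ 5, and ζ_j = a for j = 3,…,n−1, with P'(z) = ∏_{j=1}^{n−1}(z−ζ_j) and P(z) = ∫_β^z P'(w)dw having a simple root z_i ∉ {a, ζ₁, ζ₂}. Then for j, k ≥ 3, the difference of mixed second partials of the implicit root satisfies: ∂²z_i/∂ζ_j² − ∂²z_i/∂ζ₃∂ζ₄ = (1/P'(z_i)) ∫_β^{z_i} P'(w)/(w−a)² dw, and ∂²z_i/∂ζ_j∂ζ_k − ∂²z_i/∂ζ₃∂ζ₄ = 0 for j ≠ k. -/

import Mathlib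

/-!
Fix distinct `j, k ≥ 3` and move only `s = ζ_j` and `t = ζ_k` away from `a`. Since
`P' = (X - s)(X - t) R'`, the polynomial is `P = p₂ - (s + t) p₁ + s t R` with `p₁' = X R'`,
`p₂' = X² R'`, a family independent of the pair `(j, k)`. Implicit differentiation along
`t = a` gives `∂_t z = (p₁ - s R)(z) / P'(z)` and `∂_s z = (p₁ - a R)(z) / P'(z)`. These differ
by `(s - a) R(z) / P'(z)`, so differentiating in `s` at `s = a` gives
`∂²z/∂ζ_j² - ∂²z/∂ζ_j∂ζ_k = R(z_i) / P'(z_i)`. The mixed partial is the derivative of a fixed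
function of `(s, z)` along a curve whose slope is fixed by the same family, so it is the same
for every pair.
-/

open Polynomial Function Filter Topology

namespace Polynomial

theorem eq_of_derivative_eq_of_eval_eq {R : Type*} [Ring R] [IsAddTorsionFree R] {p q : R[X]}
    (x : R) (hd : derivative p = derivative q) (hx : p.eval x = q.eval x) : p = q := by
  have hc := eq_C_of_derivative_eq_zero (p := p - q) (by rw [derivative_sub, hd, sub_self])
  have h0 : (p - q).coeff 0 = 0 := by simpa [hx] using (congrArg (eval x) hc).symm
  rwa [h0, C_0, sub_eq_zero] at hc

theorem exists_derivative_eq {K : Type*} [Field K] [CharZero K] (p : K[X]) :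
    ∃ q : K[X], derivative q = p := by
  induction p using Polynomial.induction_on' with
  | add f g hf hg =>
    obtain ⟨F, rfl⟩ := hf
    obtain ⟨G, rfl⟩ := hg
    exact ⟨F + G, derivative_add⟩
  | monomial m c =>
    refine ⟨C (c / (m + 1)) * X ^ (m + 1), ?_⟩
    rw [derivative_C_mul_X_pow, ← C_mul_X_pow_eq_monomial, Nat.add_sub_cancel]
    push_cast
    rw [div_mul_cancel₀ _ (Nat.cast_add_one_ne_zero m)]

theorem exists_derivative_eq_and_eval_eq_zero {K : Type*} [Field K] [CharZero K] (p : K[X])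
    (x : K) : ∃ q : K[X], derivative q = p ∧ q.eval x = 0 := by
  obtain ⟨q, hq⟩ := exists_derivative_eq p
  exact ⟨q - C (q.eval x), by simp [hq], by simp⟩

end Polynomial

theorem Fintype.mul_prod_apply_update {ι α M : Type*} [Fintype ι] [DecidableEq ι] [CommMonoid M]
    (f : α → M) (ζ : ι → α) (j : ι) (s : α) :
    f (ζ j) * ∏ l, f (update ζ j s l) = f s * ∏ l, f (ζ l) := by
  rw [← Finset.mul_prod_erase _ _ (Finset.mem_univ j),
    ← Finset.mul_prod_erase _ (fun l => f (ζ l)) (Finset.mem_univ j), update_self,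
    Finset.prod_congr rfl fun l hl => by rw [update_of_ne (Finset.ne_of_mem_erase hl)],
    mul_left_comm]

theorem hasDerivAt_sub_mul_of_continuousAt {𝕜 : Type*} [NontriviallyNormedField 𝕜]
    {h : 𝕜 → 𝕜} {a : 𝕜} (hh : ContinuousAt h a) :
    HasDerivAt (fun s => (s - a) * h s) (h a) a := by
  rw [hasDerivAt_iff_tendsto_slope]
  refine (hh.tendsto.mono_left nhdsWithin_le_nhds).congr' ?_
  filter_upwards [self_mem_nhdsWithin] with s hs
  rw [slope_def_field, sub_self, zero_mul, sub_zero, mul_div_cancel_left₀ _ (sub_ne_zero.mpr hs)]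

noncomputable section

/-- The polynomial `P` as a function of `s = ζ_j` and `t = ζ_k`, the other `ζ_l` being fixed. -/
def pairFamily {R : Type*} [CommRing R] (p₀ p₁ p₂ : R[X]) (s t : R) : R[X] :=
  p₂ - C (s + t) * p₁ + C (s * t) * p₀

section PairFamily

variable {R : Type*} [CommRing R] (p₀ p₁ p₂ : R[X])

theorem pairFamily_comm (s t : R) : pairFamily p₀ p₁ p₂ s t = pairFamily p₀ p₁ p₂ t s := by
  rw [pairFamily, pairFamily, add_comm s, mul_comm s]

theorem pairFamily_eq_add_C_mul (s t : R) :
    pairFamily p₀ p₁ p₂ s t = p₂ - C s * p₁ + C t * (C s * p₀ - p₁) := by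
  simp only [pairFamily, C_add, C_mul]
  ring

theorem eval_derivative_pairFamily (s t z : R) :
    (derivative (pairFamily p₀ p₁ p₂ s t)).eval z = (derivative p₂).eval z
      - (s + t) * (derivative p₁).eval z + s * t * (derivative p₀).eval z := by
  simp [pairFamily]

variable {p₀ p₁ p₂} in
theorem derivative_pairFamily (h₁ : derivative p₁ = X * derivative p₀)
    (h₂ : derivative p₂ = X ^ 2 * derivative p₀) (s t : R) :
    derivative (pairFamily p₀ p₁ p₂ s t) = (X - C s) * (X - C t) * derivative p₀ := by
  simp only [pairFamily, derivative_add, derivative_sub, derivative_C_mul, h₁, h₂]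
  simp only [C_add, C_mul]
  ring

end PairFamily

section RootSlope

variable {𝕜 : Type*} [NontriviallyNormedField 𝕜] (p₀ p₁ p₂ : 𝕜[X])

theorem eval_add_C_mul_eq_zero_of_hasDerivAt {q₀ q₁ : 𝕜[X]} {w : 𝕜 → 𝕜} {x w' : 𝕜}
    (hw : HasDerivAt w w' x) (h : ∀ᶠ y in 𝓝 x, (q₀ + C y * q₁).eval (w y) = 0) :
    q₁.eval (w x) + (derivative (q₀ + C x * q₁)).eval (w x) * w' = 0 := by
  simp only [eval_add, eval_mul, eval_C] at h
  have hderiv : HasDerivAt (fun y => q₀.eval (w y) + y * q₁.eval (w y))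
      ((derivative q₀).eval (w x) * w' +
        (1 * q₁.eval (w x) + x * ((derivative q₁).eval (w x) * w'))) x :=
    ((q₀.hasDerivAt (w x)).comp x hw).add
      ((hasDerivAt_id' x).mul ((q₁.hasDerivAt (w x)).comp x hw))
  have := hderiv.unique ((hasDerivAt_const x 0).congr_of_eventuallyEq h)
  simp only [derivative_add, derivative_C_mul, eval_add, eval_mul, eval_C]
  linear_combination this

/-- `∂_t` of a root `z` of `pairFamily p₀ p₁ p₂ s t`, by implicit differentiation. -/
def rootSlope (s t z : 𝕜) : 𝕜 :=
  (p₁ - C s * p₀).eval z / (derivative (pairFamily p₀ p₁ p₂ s t)).eval z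

variable {p₀ p₁ p₂} in
theorem eq_rootSlope_of_hasDerivAt {g : 𝕜 → 𝕜} {g' s t : 𝕜} (hg : HasDerivAt g g' t)
    (hroot : ∀ᶠ t' in 𝓝 t, (pairFamily p₀ p₁ p₂ s t').eval (g t') = 0)
    (hd : (derivative (pairFamily p₀ p₁ p₂ s t)).eval (g t) ≠ 0) :
    g' = rootSlope p₀ p₁ p₂ s t (g t) := by
  simp only [pairFamily_eq_add_C_mul] at hroot hd
  have h := eval_add_C_mul_eq_zero_of_hasDerivAt hg hroot
  rw [rootSlope, pairFamily_eq_add_C_mul, eq_div_iff hd]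
  simp only [eval_sub, eval_mul, eval_C] at h ⊢
  linear_combination h

theorem rootSlope_sub_rootSlope (s t z : 𝕜) :
    rootSlope p₀ p₁ p₂ t s z - rootSlope p₀ p₁ p₂ s t z =
      (s - t) * (p₀.eval z / (derivative (pairFamily p₀ p₁ p₂ s t)).eval z) := by
  rw [rootSlope, rootSlope, pairFamily_comm p₀ p₁ p₂ t s, ← sub_div, mul_div_assoc']
  simp only [eval_sub, eval_mul, eval_C]
  ring

variable {p₀ p₁ p₂} in
theorem differentiableAt_rootSlope {t : 𝕜} {q : 𝕜 × 𝕜}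
    (hq : (derivative (pairFamily p₀ p₁ p₂ q.1 t)).eval q.2 ≠ 0) :
    DifferentiableAt 𝕜 (fun q : 𝕜 × 𝕜 => rootSlope p₀ p₁ p₂ q.1 t q.2) q := by
  simp only [rootSlope, eval_derivative_pairFamily, eval_sub, eval_mul, eval_C] at hq ⊢
  fun_prop (disch := exact hq)

/-- `∂²/∂s∂t` of the root at `(a, a)`: chain rule for `s ↦ rootSlope s a (z(s, a))`, where
`s ↦ z(s, a)` has slope `rootSlope a a z` by symmetry of the family. -/
def rootMixedDeriv (a z : 𝕜) : 𝕜 :=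
  fderiv 𝕜 (fun q : 𝕜 × 𝕜 => rootSlope p₀ p₁ p₂ q.1 a q.2) (a, z) (1, rootSlope p₀ p₁ p₂ a a z)

variable {p₀ p₁ p₂} {G : 𝕜 → 𝕜 → 𝕜} {a : 𝕜}

theorem eventually_deriv_eq_rootSlope
    (hG : ∀ᶠ q in 𝓝 (a, a), DifferentiableAt 𝕜 (uncurry G) q)
    (hroot : ∀ᶠ q in 𝓝 (a, a), (pairFamily p₀ p₁ p₂ q.1 q.2).eval (G q.1 q.2) = 0)
    (hd : (derivative (pairFamily p₀ p₁ p₂ a a)).eval (G a a) ≠ 0) :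
    (fun s => deriv (G s) a) =ᶠ[𝓝 a] (fun s => rootSlope p₀ p₁ p₂ s a (G s a)) ∧
    deriv (fun s => G s a) =ᶠ[𝓝 a] (fun s => rootSlope p₀ p₁ p₂ a s (G s a)) := by
  have hline : Tendsto (fun s => (s, a)) (𝓝 a) (𝓝 (a, a)) :=
    tendsto_id.prodMk_nhds tendsto_const_nhds
  have hGs : ∀ᶠ s in 𝓝 a, HasDerivAt (fun s => G s a) (deriv (fun s => G s a) s) s :=
    (hline.eventually hG).mono fun s hs => DifferentiableAt.hasDerivAt
      (hs.comp (f := fun s => (s, a)) s (differentiableAt_id.prodMk (differentiableAt_const a)))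
  have hGt : ∀ᶠ s in 𝓝 a, HasDerivAt (G s) (deriv (G s) a) a :=
    (hline.eventually hG).mono fun s hs =>
      (hs.comp a ((differentiableAt_const s).prodMk differentiableAt_id)).hasDerivAt
  have hd' : ∀ᶠ s in 𝓝 a, (derivative (pairFamily p₀ p₁ p₂ s a)).eval (G s a) ≠ 0 := by
    have hGa : ContinuousAt (fun s => G s a) a := hGs.self_of_nhds.continuousAt
    refine ContinuousAt.eventually_ne ?_ hd
    simp only [eval_derivative_pairFamily]
    fun_prop
  have hroot_t : ∀ᶠ s in 𝓝 a, ∀ᶠ t in 𝓝 a, (pairFamily p₀ p₁ p₂ s t).eval (G s t) = 0 := by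
    rw [nhds_prod_eq] at hroot
    exact hroot.curry
  have hroot_s : ∀ᶠ s in 𝓝 a, ∀ᶠ s' in 𝓝 s, (pairFamily p₀ p₁ p₂ a s').eval (G s' a) = 0 := by
    simp only [pairFamily_comm p₀ p₁ p₂ a]
    exact (hline.eventually hroot).eventually_nhds
  constructor
  · filter_upwards [hGt, hroot_t, hd'] with s hs hroot hds
    exact eq_rootSlope_of_hasDerivAt hs hroot hds
  · filter_upwards [hGs, hroot_s, hd'] with s hs hroot hds
    exact eq_rootSlope_of_hasDerivAt (g := fun s => G s a) hs hroot
      (by rwa [pairFamily_comm p₀ p₁ p₂ a s])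

theorem hasDerivAt_rootMixedDeriv
    (hG : ∀ᶠ q in 𝓝 (a, a), DifferentiableAt 𝕜 (uncurry G) q)
    (hroot : ∀ᶠ q in 𝓝 (a, a), (pairFamily p₀ p₁ p₂ q.1 q.2).eval (G q.1 q.2) = 0)
    (hd : (derivative (pairFamily p₀ p₁ p₂ a a)).eval (G a a) ≠ 0) :
    HasDerivAt (fun s => deriv (G s) a) (rootMixedDeriv p₀ p₁ p₂ a (G a a)) a ∧
    HasDerivAt (deriv fun s => G s a) (rootMixedDeriv p₀ p₁ p₂ a (G a a) +
      p₀.eval (G a a) / (derivative (pairFamily p₀ p₁ p₂ a a)).eval (G a a)) a := by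
  obtain ⟨hmixed, hpure⟩ := eventually_deriv_eq_rootSlope hG hroot hd
  set w : 𝕜 → 𝕜 := fun s => G s a
  have hw : HasDerivAt w (rootSlope p₀ p₁ p₂ a a (w a)) a :=
    (DifferentiableAt.hasDerivAt (hG.self_of_nhds.comp (f := fun s => (s, a)) a
      (differentiableAt_id.prodMk (differentiableAt_const a)))).congr_deriv hpure.self_of_nhds
  have hslope : HasDerivAt (fun s => rootSlope p₀ p₁ p₂ s a (w s))
      (rootMixedDeriv p₀ p₁ p₂ a (w a)) a :=
    (differentiableAt_rootSlope (q := (a, w a)) hd).hasFDerivAt.comp_hasDerivAt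
      (f := fun s => (s, w s)) a ((hasDerivAt_id' a).prodMk hw)
  refine ⟨hslope.congr_of_eventuallyEq hmixed, ?_⟩
  set D : 𝕜 → 𝕜 := fun s => (derivative (pairFamily p₀ p₁ p₂ s a)).eval (w s)
  have hD : ContinuousAt D a := by
    have hwc := hw.continuousAt
    simp only [D, eval_derivative_pairFamily]
    fun_prop
  have hsplit : deriv w =ᶠ[𝓝 a] fun s =>
      rootSlope p₀ p₁ p₂ s a (w s) + (s - a) * (p₀.eval (w s) / D s) := by
    filter_upwards [hpure] with s hs
    rw [hs, ← rootSlope_sub_rootSlope, add_sub_cancel]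
  exact (hslope.add (hasDerivAt_sub_mul_of_continuousAt
    ((p₀.continuous.continuousAt.comp hw.continuousAt).div hD hd))).congr_of_eventuallyEq hsplit

theorem hasDerivAt_rootMixedDeriv_of_update {ι : Type*} [Fintype ι] [DecidableEq ι]
    {Q : (ι → 𝕜) → 𝕜[X]} {z : (ι → 𝕜) → 𝕜} {ζ₀ : ι → 𝕜} {j k : ι} (hjk : j ≠ k)
    (hj : ζ₀ j = a) (hk : ζ₀ k = a) (hz : ∀ᶠ ζ in 𝓝 ζ₀, DifferentiableAt 𝕜 z ζ)
    (hroot : ∀ᶠ ζ in 𝓝 ζ₀, (Q ζ).eval (z ζ) = 0)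
    (hQ : ∀ s t, Q (update (update ζ₀ j s) k t) = pairFamily p₀ p₁ p₂ s t)
    (hd : (derivative (pairFamily p₀ p₁ p₂ a a)).eval (z ζ₀) ≠ 0) :
    HasDerivAt (fun s => deriv (fun t => z (update (update ζ₀ j s) k t)) a)
      (rootMixedDeriv p₀ p₁ p₂ a (z ζ₀)) a ∧
    HasDerivAt (deriv fun s => z (update ζ₀ j s)) (rootMixedDeriv p₀ p₁ p₂ a (z ζ₀) +
      p₀.eval (z ζ₀) / (derivative (pairFamily p₀ p₁ p₂ a a)).eval (z ζ₀)) a := by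
  set L : 𝕜 × 𝕜 → ι → 𝕜 := fun q => update (update ζ₀ j q.1) k q.2
  have hLj : update ζ₀ j a = ζ₀ := update_eq_self_iff.mpr hj.symm
  have hLa : L (a, a) = ζ₀ := by simp only [L, hLj, update_eq_self_iff, hk]
  have hLd : Differentiable 𝕜 L := differentiable_pi.mpr fun l => by
    simp only [L, update_apply]
    split_ifs <;> fun_prop
  have hL : Tendsto L (𝓝 (a, a)) (𝓝 ζ₀) := hLa ▸ hLd.continuous.tendsto (a, a)
  have hLk : ∀ s, update (update ζ₀ j s) k a = update ζ₀ j s := fun s =>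
    update_eq_self_iff.mpr (by rw [update_of_ne hjk.symm, hk])
  have := hasDerivAt_rootMixedDeriv (G := fun s t => z (L (s, t)))
    ((hL.eventually hz).mono fun q hq => hq.comp q (hLd q))
    ((hL.eventually hroot).mono fun q hq => by rwa [← hQ]) (by rwa [hLa])
  simpa only [L, hLk, hLj] using this

end RootSlope

end

theorem eq_pairFamily_of_derivative_eq_prod {ι K : Type*} [Fintype ι] [DecidableEq ι] [Field K]
    [CharZero K] {P : (ι → K) → K[X]} {ζ₀ : ι → K} {j k : ι} {a β : K} {R p₁ p₂ : K[X]}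
    (hPd : ∀ ζ, derivative (P ζ) = ∏ l, (X - C (ζ l))) (hPβ : ∀ ζ, (P ζ).eval β = 0)
    (hjk : j ≠ k) (hj : ζ₀ j = a) (hk : ζ₀ k = a)
    (hRd : (X - C a) ^ 2 * derivative R = derivative (P ζ₀)) (hRβ : R.eval β = 0)
    (hp₁ : derivative p₁ = X * derivative R) (hp₁β : p₁.eval β = 0)
    (hp₂ : derivative p₂ = X ^ 2 * derivative R) (hp₂β : p₂.eval β = 0) (s t : K) :
    P (update (update ζ₀ j s) k t) = pairFamily R p₁ p₂ s t := by
  refine eq_of_derivative_eq_of_eval_eq β ?_ (by simp [pairFamily, hPβ, hRβ, hp₁β, hp₂β])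
  have h₁ := Fintype.mul_prod_apply_update (fun x => X - C x) (update ζ₀ j s) k t
  have h₂ := Fintype.mul_prod_apply_update (fun x => X - C x) ζ₀ j s
  rw [update_of_ne hjk.symm, hk] at h₁
  rw [hj] at h₂
  rw [hPd] at hRd
  rw [derivative_pairFamily hp₁ hp₂, hPd]
  refine mul_left_cancel₀ (pow_ne_zero 2 (X_sub_C_ne_zero a)) ?_
  linear_combination (X - C a) * h₁ + (X - C t) * h₂ - (X - C s) * (X - C t) * hRd

/-- Let `n ≥ 5`, `ζ₀ : Fin (n-1) → ℂ` with `ζ₀ j = a` for all `j ≥ 3`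
(0-indexed: `(j:ℕ) ≥ 2`), `P ζ` the antiderivative of `∏ (z - ζ j)`
vanishing at `β`, and `z` the analytic implicit root function of the tuple
`ζ` near `ζ₀`, with value the simple root `z_i ∉ {a, ζ₁, ζ₂}`. Then for
`j, k ≥ 3` the pure second partial minus the reference mixed partial
`∂²z_i/∂ζ₃∂ζ₄` equals `(1/P'(z_i)) ∫_β^{z_i} P'(w)/(w-a)² dw` (which is
`R(z_i)/P'(z_i)` where `R' = P'/(X-a)²`, `R(β)=0`), and for `j ≠ k` the
mixed partials agree. -/
theorem stmt16 (n : ℕ) (hn : 5 ≤ n) (a β zi : ℂ)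
    (ζ₀ : Fin (n - 1) → ℂ) (hζ : ∀ j : Fin (n - 1), 2 ≤ (j : ℕ) → ζ₀ j = a)
    (P : (Fin (n - 1) → ℂ) → Polynomial ℂ)
    (hPd : ∀ ζ : Fin (n - 1) → ℂ, Polynomial.derivative (P ζ) =
      ∏ j, (Polynomial.X - Polynomial.C (ζ j)))
    (hPβ : ∀ ζ : Fin (n - 1) → ℂ, (P ζ).eval β = 0)
    (z : (Fin (n - 1) → ℂ) → ℂ)
    (hz : AnalyticAt ℂ z ζ₀) (hz0 : z ζ₀ = zi)
    (hroot : ∀ᶠ ζ in nhds ζ₀, (P ζ).eval (z ζ) = 0)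
    (hsimple : (Polynomial.derivative (P ζ₀)).eval zi ≠ 0)
    (R : Polynomial ℂ)
    (hRd : (Polynomial.X - Polynomial.C a) ^ 2 * Polynomial.derivative R =
      Polynomial.derivative (P ζ₀))
    (hRβ : R.eval β = 0)
    (mixed : Fin (n - 1) → Fin (n - 1) → ℂ)
    (hmixed : ∀ j k, mixed j k =
      deriv (fun s => deriv (fun t => z (update (update ζ₀ j s) k t)) (ζ₀ k)) (ζ₀ j))
    (pure2 : Fin (n - 1) → ℂ)
    (hpure2 : ∀ j, pure2 j = deriv (deriv (fun t => z (update ζ₀ j t))) (ζ₀ j)) :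
    (∀ j : Fin (n - 1), 2 ≤ (j : ℕ) →
      pure2 j - mixed ⟨2, by omega⟩ ⟨3, by omega⟩ =
        R.eval zi / (Polynomial.derivative (P ζ₀)).eval zi) ∧
    (∀ j k : Fin (n - 1), 2 ≤ (j : ℕ) → 2 ≤ (k : ℕ) → j ≠ k →
      mixed j k - mixed ⟨2, by omega⟩ ⟨3, by omega⟩ = 0) := by
  obtain ⟨p₁, hp₁, hp₁β⟩ := exists_derivative_eq_and_eval_eq_zero (X * derivative R) β
  obtain ⟨p₂, hp₂, hp₂β⟩ := exists_derivative_eq_and_eval_eq_zero (X ^ 2 * derivative R) β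
  have hd : derivative (pairFamily R p₁ p₂ a a) = derivative (P ζ₀) := by
    rw [derivative_pairFamily hp₁ hp₂, ← hRd, sq]
  have hzd : ∀ᶠ ζ in 𝓝 ζ₀, DifferentiableAt ℂ z ζ :=
    hz.eventually_analyticAt.mono fun _ h => h.differentiableAt
  have key : ∀ j k : Fin (n - 1), 2 ≤ (j : ℕ) → 2 ≤ (k : ℕ) → j ≠ k →
      mixed j k = rootMixedDeriv R p₁ p₂ a zi ∧
      pure2 j = rootMixedDeriv R p₁ p₂ a zi + R.eval zi / (derivative (P ζ₀)).eval zi := by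
    intro j k hj hk hjk
    obtain ⟨hm, hp⟩ := hasDerivAt_rootMixedDeriv_of_update hjk (hζ j hj) (hζ k hk) hzd hroot
      (eq_pairFamily_of_derivative_eq_prod hPd hPβ hjk (hζ j hj) (hζ k hk) hRd hRβ
        hp₁ hp₁β hp₂ hp₂β)
      (by rwa [hd, hz0])
    rw [hmixed, hpure2, hζ j hj, hζ k hk, hm.deriv, hp.deriv, hd, hz0]
    exact ⟨rfl, rfl⟩
  have h₂₃ := (key ⟨2, by omega⟩ ⟨3, by omega⟩ le_rfl (by norm_num) (by simp)).1
  refine ⟨fun j hj => ?_, fun j k hj hk hjk => by rw [(key j k hj hk hjk).1, h₂₃, sub_self]⟩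
  obtain ⟨k, hk, hjk⟩ : ∃ k : Fin (n - 1), 2 ≤ (k : ℕ) ∧ j ≠ k := by
    by_cases h : (j : ℕ) = 2
    · exact ⟨⟨3, by omega⟩, by norm_num, fun e => by simp [e] at h⟩
    · exact ⟨⟨2, by omega⟩, le_rfl, fun e => h (by simp [e])⟩
  rw [(key j k hj hk hjk).2, h₂₃, add_sub_cancel_left]
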